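/- Let S̃ = (1/3)·[[1,−2,−2],[−2,−2,1],[−2,1,−2]] and let T̃ = diag(d₀, d₁, d₂) be a diagonal 3×3 complex matrix whose diagonal entries d₀, d₁, d₂ are roots of unity and are not all equal. If the matrix S̃·T̃ has finite order (there exists n ≥ 1 with (S̃·T̃)ⁿ = 𝟙), then there exists a root of unity η such that either (d₀, d₁, d₂) = (η, η·ω, η·ω²) or (d₀, d₁, d₂) = (η, η·ω², η·ω), where ω = e^{2πi/3}. -/

import Mathlib

/-!
Both `M = S̃·T̃` and `M⁻¹ = T̃⁻¹·S̃` have finite order, so their traces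
`(d₀ - 2d₁ - 2d₂)/3` and `(d₀⁻¹ - 2d₁⁻¹ - 2d₂⁻¹)/3` are algebraic integers. Modulo 3 this says
`d₀ + d₁ + d₂ ≡ 0` and `d₀⁻¹ + d₁⁻¹ + d₂⁻¹ ≡ 0`; for `a = d₁/d₀`, `b = d₂/d₀` it follows that
`ab ≡ 1` and then `a³ ≡ 1`. A root of unity `ζ ≢ 1` is never `≡ 1 (mod n)` for `n ≥ 3`: if `ζ` has
order `m + 1 ≥ 2`, then `∏_{k=1}^{m} (1 - ζ^k) = m + 1` would be divisible by `nᵐ > m + 1`.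
Hence `b = a⁻¹ = a²` with `a³ = 1`, and `a ≠ 1` because the `dᵢ` are not all equal.
-/

noncomputable def ω : ℂ := Complex.exp (2 * Real.pi * Complex.I / 3)

/-- `S̃ = (1/3)·[[1,−2,−2],[−2,−2,1],[−2,1,−2]] = 2u₁u₁† − 𝟙` for
`u₁ = (2,−1,−1)ᵀ/√6`. -/
noncomputable def Stilde : Matrix (Fin 3) (Fin 3) ℂ :=
  ((1 : ℂ) / 3) • !![1, -2, -2; -2, -2, 1; -2, 1, -2]

open Finset Matrix

theorem IsOfFinOrder.isIntegral {R B : Type*} [CommRing R] [Ring B] [Algebra R B] {x : B}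
    (hx : IsOfFinOrder x) : IsIntegral R x :=
  .of_pow hx.orderOf_pos (pow_orderOf_eq_one x ▸ isIntegral_one)

theorem IsOfFinOrder.inv₀ {G₀ : Type*} [GroupWithZero G₀] {x : G₀} (hx : IsOfFinOrder x) :
    IsOfFinOrder x⁻¹ := by
  obtain ⟨n, hn, hxn⟩ := isOfFinOrder_iff_pow_eq_one.1 hx
  exact isOfFinOrder_iff_pow_eq_one.2 ⟨n, hn, by rw [inv_pow, hxn, inv_one]⟩

theorem Matrix.isOfFinOrder_inv {n R : Type*} [Fintype n] [DecidableEq n] [CommRing R]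
    {A : Matrix n n R} (hA : IsOfFinOrder A) : IsOfFinOrder A⁻¹ := by
  obtain ⟨k, hk, hAk⟩ := isOfFinOrder_iff_pow_eq_one.1 hA
  exact isOfFinOrder_iff_pow_eq_one.2 ⟨k, hk, by rw [inv_pow', hAk, inv_one]⟩

theorem Matrix.isIntegral_trace_of_isOfFinOrder {n K : Type*} [Fintype n] [DecidableEq n]
    [Field K] [IsAlgClosed K] {A : Matrix n n K} (hA : IsOfFinOrder A) :
    IsIntegral ℤ A.trace := by
  rcases isEmpty_or_nonempty n with _ | _
  · simp [isIntegral_zero]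
  rw [trace_eq_sum_roots_charpoly]
  refine Subalgebra.multiset_sum_mem (integralClosure ℤ K) fun μ hμ => ?_
  obtain ⟨k, hk, hAk⟩ := isOfFinOrder_iff_pow_eq_one.1 hA
  have hμA : μ ∈ spectrum K A :=
    mem_spectrum_of_isRoot_charpoly (Polynomial.isRoot_of_mem_roots hμ)
  have hμk : μ ^ k = 1 := by simpa [hAk] using spectrum.pow_mem_pow A k hμA
  exact IsOfFinOrder.isIntegral (isOfFinOrder_iff_pow_eq_one.2 ⟨k, hk, hμk⟩)

section RootsOfUnity

variable {K : Type*} [Field K] [CharZero K]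

theorem Int.dvd_of_intCast_eq_mul_isIntegral {a b : ℤ} {t : K} (ht : IsIntegral ℤ t)
    (h : (a : K) = b * t) : b ∣ a := by
  rcases eq_or_ne b 0 with rfl | hb
  · simpa using h
  have hb' : (b : K) ≠ 0 := Int.cast_ne_zero.2 hb
  have htq : t = algebraMap ℚ K (a / b) := by
    rw [map_div₀, map_intCast, map_intCast, h]
    field_simp
  rw [htq, isIntegral_algebraMap_iff (algebraMap ℚ K).injective] at ht
  obtain ⟨c, hc⟩ := IsIntegrallyClosed.isIntegral_iff.1 ht
  refine ⟨c, ?_⟩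
  have hbq : (b : ℚ) ≠ 0 := Int.cast_ne_zero.2 hb
  rw [eq_div_iff hbq, algebraMap_int_eq, eq_intCast] at hc
  exact_mod_cast hc.symm.trans (mul_comm _ _)

theorem IsOfFinOrder.eq_one_of_isIntegral_sub_one_div {ζ : K} (hζ : IsOfFinOrder ζ) {n : ℕ}
    (hn : 3 ≤ n) (h : IsIntegral ℤ ((ζ - 1) / n)) : ζ = 1 := by
  by_contra hζ1
  obtain ⟨m, hm⟩ := Nat.exists_eq_add_one.2 hζ.orderOf_pos
  have hm0 : m ≠ 0 := by rintro rfl; exact hζ1 (orderOf_eq_one_iff.1 hm)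
  have hprim : IsPrimitiveRoot ζ (m + 1) := hm ▸ IsPrimitiveRoot.orderOf ζ
  have hn0 : (n : K) ≠ 0 := Nat.cast_ne_zero.2 (by omega)
  set r := (ζ - 1) / n
  have hfactor (j : ℕ) : 1 - ζ ^ (j + 1) = n * -(r * ∑ i ∈ range (j + 1), ζ ^ i) := by
    have hr : n * r = ζ - 1 := mul_div_cancel₀ _ hn0
    linear_combination (∑ i ∈ range (j + 1), ζ ^ i) * hr + mul_geom_sum ζ (j + 1)
  have hprod := hprim.prod_one_sub_pow_eq_order
  simp_rw [hfactor, prod_mul_distrib, prod_const, card_range] at hprod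
  have hT : IsIntegral ℤ (∏ j ∈ range m, -(r * ∑ i ∈ range (j + 1), ζ ^ i)) :=
    IsIntegral.prod _ fun j _ => (h.mul (IsIntegral.sum _ fun i _ => hζ.isIntegral.pow i)).neg
  have hdvd : ((n ^ m : ℕ) : ℤ) ∣ ((m + 1 : ℕ) : ℤ) :=
    Int.dvd_of_intCast_eq_mul_isIntegral hT (by push_cast; exact hprod.symm)
  have hle : n ^ m ≤ m + 1 := Nat.le_of_dvd m.succ_pos (Int.natCast_dvd_natCast.1 hdvd)
  have hlt : m + 1 < n ^ m := calc
    m + 1 ≤ 2 ^ m := Nat.lt_two_pow_self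
    _ < n ^ m := Nat.pow_lt_pow_left (by omega) hm0
  omega

theorem isIntegral_one_add_div_add_div_div_three {x y z : K} (hx : IsOfFinOrder x)
    (hy : IsOfFinOrder y) (hz : IsOfFinOrder z) (h : IsIntegral ℤ ((x - 2 * y - 2 * z) / 3)) :
    IsIntegral ℤ ((1 + y / x + z / x) / 3) := by
  have hx0 : x ≠ 0 := hx.isUnit.ne_zero
  have hsum : (1 + y / x + z / x) / 3 = x⁻¹ * ((x - 2 * y - 2 * z) / 3 + y + z) := by
    field_simp
    ring
  rw [hsum]
  exact hx.inv₀.isIntegral.mul ((h.add hy.isIntegral).add hz.isIntegral)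

theorem pow_three_eq_one_and_eq_sq_of_isIntegral {a b : K} (ha : IsOfFinOrder a)
    (hb : IsOfFinOrder b) (h : IsIntegral ℤ ((1 + a + b) / 3))
    (h' : IsIntegral ℤ ((1 + a⁻¹ + b⁻¹) / 3)) : a ^ 3 = 1 ∧ b = a ^ 2 := by
  have ha0 : a ≠ 0 := ha.isUnit.ne_zero
  have hb0 : b ≠ 0 := hb.isUnit.ne_zero
  have hab : a * b = 1 := by
    refine (ha.mul hb).eq_one_of_isIntegral_sub_one_div (n := 3) le_rfl ?_
    have hdiff : (a * b - 1) / (3 : ℕ) = a * b * ((1 + a⁻¹ + b⁻¹) / 3) - (1 + a + b) / 3 := by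
      push_cast
      field_simp
      ring
    rw [hdiff]
    exact ((ha.isIntegral.mul hb.isIntegral).mul h').sub h
  have ha3 : a ^ 3 = 1 := by
    refine ha.pow.eq_one_of_isIntegral_sub_one_div le_rfl ?_
    have hprod : (a ^ 3 - 1) / (3 : ℕ) = a * (a - 1) * ((1 + a + b) / 3) := by
      push_cast
      linear_combination (-(a - 1) / 3) * hab
    rw [hprod]
    exact (ha.isIntegral.mul (ha.isIntegral.sub isIntegral_one)).mul h
  exact ⟨ha3, by linear_combination (-b) * ha3 + a ^ 2 * hab⟩

theorem exists_pow_three_eq_one_of_isIntegral_div_three {x y z : K} (hx : IsOfFinOrder x)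
    (hy : IsOfFinOrder y) (hz : IsOfFinOrder z) (h : IsIntegral ℤ ((x - 2 * y - 2 * z) / 3))
    (h' : IsIntegral ℤ ((x⁻¹ - 2 * y⁻¹ - 2 * z⁻¹) / 3)) :
    ∃ a : K, a ^ 3 = 1 ∧ y = x * a ∧ z = x * a ^ 2 := by
  have hx0 : x ≠ 0 := hx.isUnit.ne_zero
  have h₁ := isIntegral_one_add_div_add_div_div_three hx hy hz h
  have h₂ := isIntegral_one_add_div_add_div_div_three hx.inv₀ hy.inv₀ hz.inv₀ h'
  rw [inv_div_inv, inv_div_inv, ← inv_div y x, ← inv_div z x] at h₂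
  obtain ⟨ha3, hb⟩ := pow_three_eq_one_and_eq_sq_of_isIntegral
    (div_eq_mul_inv y x ▸ hy.mul hx.inv₀) (div_eq_mul_inv z x ▸ hz.mul hx.inv₀) h₁ h₂
  refine ⟨y / x, ha3, by field_simp, by rw [← hb]; field_simp⟩

end RootsOfUnity

theorem Stilde_mul_self : Stilde * Stilde = 1 := by
  ext i j
  fin_cases i <;> fin_cases j <;>
    simp [Stilde, Matrix.mul_apply, Fin.sum_univ_three] <;> norm_num

theorem trace_Stilde_mul_diagonal (d : Fin 3 → ℂ) :
    (Stilde * diagonal d).trace = (d 0 - 2 * d 1 - 2 * d 2) / 3 := by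
  simp only [trace, diag_apply, mul_diagonal, Fin.sum_univ_three]
  simp [Stilde]
  ring

theorem inv_Stilde_mul_diagonal {d : Fin 3 → ℂ} (hd : ∀ i, d i ≠ 0) :
    (Stilde * diagonal d)⁻¹ = diagonal d⁻¹ * Stilde := by
  refine inv_eq_right_inv ?_
  rw [Matrix.mul_assoc, ← Matrix.mul_assoc (diagonal d), diagonal_mul_diagonal]
  simp [Pi.inv_apply, hd, Stilde_mul_self]

theorem isPrimitiveRoot_ω : IsPrimitiveRoot ω 3 := by
  simpa [ω] using Complex.isPrimitiveRoot_exp 3 (by norm_num)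

theorem eq_one_or_eq_ω_or_eq_ω_sq {a : ℂ} (ha : a ^ 3 = 1) : a = 1 ∨ a = ω ∨ a = ω ^ 2 := by
  obtain ⟨i, hi, rfl⟩ := isPrimitiveRoot_ω.eq_pow_of_pow_eq_one ha
  interval_cases i <;> simp

/-- If `T̃ = diag(d₀,d₁,d₂)` has roots of unity on the diagonal,
not all equal, and `S̃·T̃` has finite order, then `(d₀,d₁,d₂) = (η, ηω, ηω²)` or
`(η, ηω², ηω)` for some root of unity `η`. -/
theorem stmt7 (d : Fin 3 → ℂ)
    (hd : ∀ i, ∃ n : ℕ, 0 < n ∧ d i ^ n = 1)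
    (hne : ¬(d 0 = d 1 ∧ d 1 = d 2))
    (hfin : ∃ n : ℕ, 1 ≤ n ∧ (Stilde * Matrix.diagonal d) ^ n = 1) :
    ∃ η : ℂ, (∃ n : ℕ, 0 < n ∧ η ^ n = 1) ∧
      ((d 0 = η ∧ d 1 = η * ω ∧ d 2 = η * ω ^ 2) ∨
       (d 0 = η ∧ d 1 = η * ω ^ 2 ∧ d 2 = η * ω)) := by
  have hdi (i : Fin 3) : IsOfFinOrder (d i) := isOfFinOrder_iff_pow_eq_one.2 (hd i)
  have hM : IsOfFinOrder (Stilde * diagonal d) := isOfFinOrder_iff_pow_eq_one.2 hfin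
  have htr := trace_Stilde_mul_diagonal d ▸ isIntegral_trace_of_isOfFinOrder hM
  have htr_inv := isIntegral_trace_of_isOfFinOrder (isOfFinOrder_inv hM)
  rw [inv_Stilde_mul_diagonal fun i => (hdi i).isUnit.ne_zero, trace_mul_comm,
    trace_Stilde_mul_diagonal] at htr_inv
  obtain ⟨a, ha3, h₁, h₂⟩ :=
    exists_pow_three_eq_one_of_isIntegral_div_three (hdi 0) (hdi 1) (hdi 2) htr htr_inv
  refine ⟨d 0, hd 0, ?_⟩
  rcases eq_one_or_eq_ω_or_eq_ω_sq ha3 with rfl | rfl | rfl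
  · exact absurd ⟨by simp [h₁], by simp [h₁, h₂]⟩ hne
  · exact Or.inl ⟨rfl, h₁, h₂⟩
  · refine Or.inr ⟨rfl, h₁, ?_⟩
    rw [h₂, ← pow_mul, show 2 * 2 = 3 + 1 from rfl, pow_succ, isPrimitiveRoot_ω.pow_eq_one,
      one_mul]
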